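/- arXiv:1803.01835 — 2 statements merged into one kernel-verified Lean document; each statement's English description precedes it below -/
import Mathlib

section
/- For every dimension d ≥ 1 there is a constant c ≥ 1, independent of α, such that for all α ∈ (0,2) and all ξ ∈ ℝ, one has c⁻¹|ξ|^α ≤ α(2−α)∫_ℝ (1 − cos(ξh))·2/|h|^{1+α} dh ≤ c|ξ|^α. (Equivalently, the one-dimensional symbol α(2−α)∫_ℝ(1−e^{iξh})²/|h|^{1+α} dh is comparable to |ξ|^α uniformly in α.) -/
/-!
Substituting `u = ξ h` reduces everything to `ξ = 1`, i.e. to bounding `α (2 - α) J(α)`, where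
`J(α) = ∫₀^∞ (1 - cos u) u^(-1-α) du`, above and below by absolute constants. Near `0`,
`1 - cos u` is comparable to `u²`, which contributes `≍ 1 / (2 - α)`; on `[1, ∞)` the bound
`1 - cos u ≤ 2` gives at most `2 / α`. The lower bound of order `1 / α` needs the oscillation
of `cos`: because `u^(-1-α)` decreases, comparing `1 - cos u` with its half-period shift
`1 + cos u` shows `J(α) ≥ ∫_π^∞ u^(-1-α) du = π^(-α) / α`.
-/

open MeasureTheory Real Set

theorem setIntegral_Ioi_comp_add_right (f : ℝ → ℝ) (a c : ℝ) :
    ∫ x in Ioi a, f (x + c) = ∫ x in Ioi (a + c), f x := by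
  rw [← image_add_const_Ioi, (measurePreserving_add_right volume c).setIntegral_image_emb
    (measurableEmbedding_addRight c)]

theorem IntegrableOn.comp_add_right_Ioi {f : ℝ → ℝ} {a c : ℝ}
    (hf : IntegrableOn f (Ioi (a + c))) : IntegrableOn (fun x => f (x + c)) (Ioi a) := by
  rw [← image_add_const_Ioi] at hf
  exact ((measurePreserving_add_right volume c).integrableOn_image
    (measurableEmbedding_addRight c)).1 hf

/-- Shifting by half a period turns `1 - cos` into `1 + cos`; since `f` decreases, both
`(1 - cos u) f (u + π)` and `(1 + cos u) f (u + π)` integrate to at most the right-hand side,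
and their sum is `2 f (u + π)`. -/
theorem integral_Ioi_pi_le_integral_one_sub_cos_mul {f : ℝ → ℝ} (hf : AntitoneOn f (Ioi 0))
    (hf_nonneg : ∀ u ∈ Ioi (0 : ℝ), 0 ≤ f u) (hf_int : IntegrableOn f (Ioi π))
    (hg_int : IntegrableOn (fun u => (1 - cos u) * f u) (Ioi 0)) :
    ∫ u in Ioi π, f u ≤ ∫ u in Ioi 0, (1 - cos u) * f u := by
  have h_shift : ∫ u in Ioi 0, f (u + π) = ∫ u in Ioi π, f u := by
    rw [setIntegral_Ioi_comp_add_right, zero_add]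
  have hshift_int : IntegrableOn (fun u => f (u + π)) (Ioi 0) :=
    IntegrableOn.comp_add_right_Ioi (by rwa [zero_add])
  have hminus_int : IntegrableOn (fun u => (1 - cos u) * f (u + π)) (Ioi 0) :=
    hshift_int.bdd_mul (c := 2) (by fun_prop) <| ae_of_all _ fun u => by
      rw [norm_eq_abs, abs_le]; constructor <;> linarith [cos_le_one u, neg_one_le_cos u]
  have hplus_int : IntegrableOn (fun u => (1 + cos u) * f (u + π)) (Ioi 0) :=
    hshift_int.bdd_mul (c := 2) (by fun_prop) <| ae_of_all _ fun u => by
      rw [norm_eq_abs, abs_le]; constructor <;> linarith [cos_le_one u, neg_one_le_cos u]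
  have h_minus : ∫ u in Ioi 0, (1 - cos u) * f (u + π) ≤ ∫ u in Ioi 0, (1 - cos u) * f u := by
    refine setIntegral_mono_on hminus_int hg_int measurableSet_Ioi fun u hu => ?_
    have hu' : u ≤ u + π := by linarith [pi_pos]
    exact mul_le_mul_of_nonneg_left (hf hu (lt_of_lt_of_le hu hu') hu')
      (by linarith [cos_le_one u])
  have h_plus : ∫ u in Ioi 0, (1 + cos u) * f (u + π) ≤ ∫ u in Ioi 0, (1 - cos u) * f u :=
    calc ∫ u in Ioi 0, (1 + cos u) * f (u + π)
        = ∫ u in Ioi 0, (1 - cos (u + π)) * f (u + π) := by simp only [cos_add_pi, sub_neg_eq_add]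
      _ = ∫ u in Ioi π, (1 - cos u) * f u := by
        rw [setIntegral_Ioi_comp_add_right (fun u => (1 - cos u) * f u), zero_add]
      _ ≤ ∫ u in Ioi 0, (1 - cos u) * f u := by
        refine setIntegral_mono_set hg_int ?_ (Ioi_subset_Ioi pi_pos.le).eventuallyLE
        filter_upwards [ae_restrict_mem measurableSet_Ioi] with u hu
        exact mul_nonneg (by linarith [cos_le_one u]) (hf_nonneg u hu)
  have h_sum : (∫ u in Ioi 0, (1 - cos u) * f (u + π)) + ∫ u in Ioi 0, (1 + cos u) * f (u + π)
      = 2 * ∫ u in Ioi π, f u := by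
    rw [← integral_add hminus_int hplus_int, ← h_shift, ← integral_const_mul]
    congr 1 with u
    ring
  linarith

noncomputable def cosKernelIntegral (α : ℝ) : ℝ := ∫ u in Ioi 0, (1 - cos u) * u ^ (-(1 + α))

theorem sq_mul_rpow_neg_one_add {u : ℝ} (hu : 0 < u) (α : ℝ) :
    u ^ 2 * u ^ (-(1 + α)) = u ^ (1 - α) := by
  rw [← rpow_two, ← rpow_add hu]
  ring_nf

theorem one_sub_cos_mul_rpow_le_rpow {u : ℝ} (hu : 0 < u) (α : ℝ) :
    (1 - cos u) * u ^ (-(1 + α)) ≤ u ^ (1 - α) / 2 := by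
  rw [← sq_mul_rpow_neg_one_add hu, mul_div_right_comm]
  exact mul_le_mul_of_nonneg_right (by linarith [one_sub_sq_div_two_le_cos (x := u)])
    (rpow_nonneg hu.le _)

theorem two_div_pi_sq_mul_rpow_le_one_sub_cos_mul_rpow {u : ℝ} (hu : 0 < u) (huπ : u ≤ π) (α : ℝ) :
    2 / π ^ 2 * u ^ (1 - α) ≤ (1 - cos u) * u ^ (-(1 + α)) := by
  rw [← sq_mul_rpow_neg_one_add hu, ← mul_assoc]
  refine mul_le_mul_of_nonneg_right ?_ (rpow_nonneg hu.le _)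
  linarith [cos_le_one_sub_mul_cos_sq (abs_le.2 ⟨by linarith [pi_pos], huπ⟩)]

theorem one_sub_cos_mul_rpow_le_two_mul_rpow {u : ℝ} (hu : 0 < u) (α : ℝ) :
    (1 - cos u) * u ^ (-(1 + α)) ≤ 2 * u ^ (-(1 + α)) :=
  mul_le_mul_of_nonneg_right (by linarith [neg_one_le_cos u]) (rpow_nonneg hu.le _)

theorem one_sub_cos_mul_rpow_nonneg {u : ℝ} (hu : 0 < u) (α : ℝ) :
    0 ≤ (1 - cos u) * u ^ (-(1 + α)) :=
  mul_nonneg (by linarith [cos_le_one u]) (rpow_nonneg hu.le _)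

theorem integral_Ioc_zero_one_rpow_one_sub {α : ℝ} (hα : α < 2) :
    ∫ u in Ioc (0 : ℝ) 1, u ^ (1 - α) = 1 / (2 - α) := by
  rw [← intervalIntegral.integral_of_le zero_le_one, integral_rpow (Or.inl (by linarith)),
    one_rpow, zero_rpow (by linarith), show 1 - α + 1 = 2 - α by ring, sub_zero]

theorem integrableOn_Ioc_zero_one_rpow_one_sub {α : ℝ} (hα : α < 2) :
    IntegrableOn (fun u : ℝ => u ^ (1 - α)) (Ioc 0 1) :=
  (intervalIntegral.intervalIntegrable_rpow' (by linarith)).1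

section
variable {α : ℝ}

theorem aestronglyMeasurable_one_sub_cos_mul_rpow (μ : Measure ℝ) :
    AEStronglyMeasurable (fun u : ℝ => (1 - cos u) * u ^ (-(1 + α))) μ := by
  fun_prop

theorem integrableOn_Ioc_one_sub_cos_mul_rpow (hα : α < 2) :
    IntegrableOn (fun u : ℝ => (1 - cos u) * u ^ (-(1 + α))) (Ioc 0 1) := by
  refine ((integrableOn_Ioc_zero_one_rpow_one_sub hα).div_const 2).mono'
    (aestronglyMeasurable_one_sub_cos_mul_rpow _) ?_
  filter_upwards [ae_restrict_mem measurableSet_Ioc] with u hu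
  rw [norm_of_nonneg (one_sub_cos_mul_rpow_nonneg hu.1 α)]
  exact one_sub_cos_mul_rpow_le_rpow hu.1 α

theorem integrableOn_Ioi_one_sub_cos_mul_rpow (hα : 0 < α) :
    IntegrableOn (fun u : ℝ => (1 - cos u) * u ^ (-(1 + α))) (Ioi 1) := by
  refine ((integrableOn_Ioi_rpow_of_lt (a := -(1 + α)) (by linarith) one_pos).const_mul 2).mono'
    (aestronglyMeasurable_one_sub_cos_mul_rpow _) ?_
  filter_upwards [ae_restrict_mem measurableSet_Ioi] with u hu
  have hu0 : 0 < u := one_pos.trans hu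
  rw [norm_of_nonneg (one_sub_cos_mul_rpow_nonneg hu0 α)]
  exact one_sub_cos_mul_rpow_le_two_mul_rpow hu0 α

theorem integrableOn_one_sub_cos_mul_rpow (hα₀ : 0 < α) (hα₂ : α < 2) :
    IntegrableOn (fun u : ℝ => (1 - cos u) * u ^ (-(1 + α))) (Ioi 0) := by
  rw [← Ioc_union_Ioi_eq_Ioi zero_le_one]
  exact (integrableOn_Ioc_one_sub_cos_mul_rpow hα₂).union
    (integrableOn_Ioi_one_sub_cos_mul_rpow hα₀)

theorem cosKernelIntegral_eq_add (hα₀ : 0 < α) (hα₂ : α < 2) :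
    cosKernelIntegral α = (∫ u in Ioc 0 1, (1 - cos u) * u ^ (-(1 + α))) +
      ∫ u in Ioi 1, (1 - cos u) * u ^ (-(1 + α)) := by
  rw [cosKernelIntegral, ← Ioc_union_Ioi_eq_Ioi zero_le_one]
  exact setIntegral_union (Ioc_disjoint_Ioi le_rfl) measurableSet_Ioi
    (integrableOn_Ioc_one_sub_cos_mul_rpow hα₂) (integrableOn_Ioi_one_sub_cos_mul_rpow hα₀)

theorem mul_mul_cosKernelIntegral_le_four (hα₀ : 0 < α) (hα₂ : α < 2) :
    α * (2 - α) * cosKernelIntegral α ≤ 4 := by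
  have h_near : ∫ u in Ioc 0 1, (1 - cos u) * u ^ (-(1 + α)) ≤ 1 / (2 - α) / 2 := by
    rw [← integral_Ioc_zero_one_rpow_one_sub hα₂, ← integral_div]
    exact setIntegral_mono_on (integrableOn_Ioc_one_sub_cos_mul_rpow hα₂)
      ((integrableOn_Ioc_zero_one_rpow_one_sub hα₂).div_const 2) measurableSet_Ioc
      fun u hu => one_sub_cos_mul_rpow_le_rpow hu.1 α
  have h_tail : ∫ u in Ioi 1, (1 - cos u) * u ^ (-(1 + α)) ≤ 2 * (1 / α) := by
    have h := integral_Ioi_rpow_of_lt (a := -(1 + α)) (by linarith) one_pos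
    rw [one_rpow, show -(1 + α) + 1 = -α by ring, neg_div_neg_eq] at h
    rw [← h, ← integral_const_mul]
    exact setIntegral_mono_on (integrableOn_Ioi_one_sub_cos_mul_rpow hα₀)
      ((integrableOn_Ioi_rpow_of_lt (by linarith) one_pos).const_mul 2) measurableSet_Ioi
      fun u hu => one_sub_cos_mul_rpow_le_two_mul_rpow (one_pos.trans hu) α
  have h2α : 0 < 2 - α := by linarith
  calc α * (2 - α) * cosKernelIntegral α
      ≤ α * (2 - α) * (1 / (2 - α) / 2 + 2 * (1 / α)) := by
        rw [cosKernelIntegral_eq_add hα₀ hα₂]; gcongr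
    _ = 4 - 3 / 2 * α := by field_simp; ring
    _ ≤ 4 := by linarith

theorem two_div_pi_sq_le_mul_cosKernelIntegral (hα₀ : 0 < α) (hα₂ : α < 2) :
    2 / π ^ 2 ≤ (2 - α) * cosKernelIntegral α := by
  have h_near : 2 / π ^ 2 * (1 / (2 - α)) ≤ ∫ u in Ioc 0 1, (1 - cos u) * u ^ (-(1 + α)) := by
    rw [← integral_Ioc_zero_one_rpow_one_sub hα₂, ← integral_const_mul]
    exact setIntegral_mono_on ((integrableOn_Ioc_zero_one_rpow_one_sub hα₂).const_mul _)
      (integrableOn_Ioc_one_sub_cos_mul_rpow hα₂) measurableSet_Ioc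
      fun u hu => two_div_pi_sq_mul_rpow_le_one_sub_cos_mul_rpow hu.1
        (hu.2.trans (by linarith [pi_gt_three])) α
  have h_tail : 0 ≤ ∫ u in Ioi 1, (1 - cos u) * u ^ (-(1 + α)) :=
    setIntegral_nonneg measurableSet_Ioi fun u hu =>
      one_sub_cos_mul_rpow_nonneg (one_pos.trans hu) α
  have h2α : 0 < 2 - α := by linarith
  calc 2 / π ^ 2 = (2 - α) * (2 / π ^ 2 * (1 / (2 - α))) := by field_simp
    _ ≤ (2 - α) * cosKernelIntegral α := by
        rw [cosKernelIntegral_eq_add hα₀ hα₂]; gcongr; linarith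

theorem rpow_neg_pi_le_mul_cosKernelIntegral (hα₀ : 0 < α) (hα₂ : α < 2) :
    π ^ (-α) ≤ α * cosKernelIntegral α := by
  have h := integral_Ioi_rpow_of_lt (a := -(1 + α)) (by linarith) pi_pos
  rw [show -(1 + α) + 1 = -α by ring, neg_div_neg_eq] at h
  have h_le := integral_Ioi_pi_le_integral_one_sub_cos_mul (f := fun u => u ^ (-(1 + α)))
    (fun u hu v _ huv => rpow_le_rpow_of_nonpos hu huv (by linarith))
    (fun u hu => rpow_nonneg (le_of_lt hu) _) (integrableOn_Ioi_rpow_of_lt (by linarith) pi_pos)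
    (integrableOn_one_sub_cos_mul_rpow hα₀ hα₂)
  rw [h] at h_le
  rw [cosKernelIntegral, ← div_le_iff₀' hα₀]
  exact h_le

theorem inv_pi_sq_le_mul_mul_cosKernelIntegral (hα₀ : 0 < α) (hα₂ : α < 2) :
    (π ^ 2)⁻¹ ≤ α * (2 - α) * cosKernelIntegral α := by
  have h_small := two_div_pi_sq_le_mul_cosKernelIntegral hα₀ hα₂
  have h_large : (π ^ 2)⁻¹ ≤ α * cosKernelIntegral α := by
    calc (π ^ 2)⁻¹ = π ^ (-2 : ℝ) := by rw [rpow_neg pi_pos.le, rpow_two]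
      _ ≤ π ^ (-α) := rpow_le_rpow_of_exponent_le (by linarith [pi_gt_three]) (by linarith)
      _ ≤ α * cosKernelIntegral α := rpow_neg_pi_le_mul_cosKernelIntegral hα₀ hα₂
  have hπ : 0 < (π ^ 2)⁻¹ := by positivity
  rw [div_eq_mul_inv] at h_small
  nlinarith

theorem integral_one_sub_cos_mul_div_abs_rpow (hα : α ≠ 0) (ξ : ℝ) :
    ∫ h : ℝ, (1 - cos (ξ * h)) * 2 / |h| ^ (1 + α) = 4 * |ξ| ^ α * cosKernelIntegral α := by
  rcases eq_or_ne ξ 0 with rfl | hξ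
  · simp [zero_rpow hα]
  set F : ℝ → ℝ := fun u => 2 * ((1 - cos u) * u ^ (-(1 + α)))
  have hξ' : 0 < |ξ| := abs_pos.2 hξ
  have h_pt (h : ℝ) : (1 - cos (ξ * h)) * 2 / |h| ^ (1 + α) = |ξ| ^ (1 + α) * F |ξ * h| := by
    rcases eq_or_ne h 0 with rfl | hh
    · simp [F]
    simp only [F, cos_abs]
    simp only [abs_mul, mul_rpow hξ'.le (abs_nonneg h), rpow_neg (abs_nonneg h),
      rpow_neg hξ'.le]
    field_simp
  calc ∫ h : ℝ, (1 - cos (ξ * h)) * 2 / |h| ^ (1 + α)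
      = |ξ| ^ (1 + α) * ∫ h : ℝ, F |ξ * h| := by simp only [h_pt, integral_const_mul]
    _ = |ξ| ^ (1 + α) * (|ξ⁻¹| * (2 * ∫ u in Ioi 0, F u)) := by
        rw [Measure.integral_comp_mul_left (fun u => F |u|), integral_comp_abs, smul_eq_mul]
    _ = 4 * |ξ| ^ α * cosKernelIntegral α := by
        rw [integral_const_mul, ← cosKernelIntegral, abs_inv, rpow_add hξ', rpow_one]
        field_simp
        ring

end

theorem symbol_comparable_general :
    ∃ c : ℝ, 1 ≤ c ∧ ∀ α : ℝ, 0 < α → α < 2 → ∀ ξ : ℝ,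
      c⁻¹ * |ξ| ^ α ≤
        α * (2 - α) * (∫ h : ℝ, (1 - Real.cos (ξ * h)) * 2 / |h| ^ (1 + α)) ∧
      α * (2 - α) * (∫ h : ℝ, (1 - Real.cos (ξ * h)) * 2 / |h| ^ (1 + α)) ≤
        c * |ξ| ^ α := by
  refine ⟨16, by norm_num, fun α hα₀ hα₂ ξ => ?_⟩
  have h_lower := inv_pi_sq_le_mul_mul_cosKernelIntegral hα₀ hα₂
  have h_upper := mul_mul_cosKernelIntegral_le_four hα₀ hα₂
  have hπ : (16 : ℝ)⁻¹ ≤ 4 * (π ^ 2)⁻¹ := by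
    have : π ^ 2 ≤ 16 := by nlinarith [pi_lt_four, pi_pos]
    rw [← div_eq_mul_inv, le_div_iff₀ (by positivity)]
    linarith
  have hξ : 0 ≤ |ξ| ^ α := rpow_nonneg (abs_nonneg ξ) α
  rw [integral_one_sub_cos_mul_div_abs_rpow hα₀.ne']
  constructor <;> nlinarith

theorem symbol_comparable (d : ℕ) (hd : 1 ≤ d) :
    ∃ c : ℝ, 1 ≤ c ∧ ∀ α : ℝ, 0 < α → α < 2 → ∀ ξ : ℝ,
      c⁻¹ * |ξ| ^ α ≤
        α * (2 - α) * (∫ h : ℝ, (1 - Real.cos (ξ * h)) * 2 / |h| ^ (1 + α)) ∧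
      α * (2 - α) * (∫ h : ℝ, (1 - Real.cos (ξ * h)) * 2 / |h| ^ (1 + α)) ≤
        c * |ξ| ^ α :=
  symbol_comparable_general
end

section
/- Let d ≥ 2, α₁,…,α_d ∈ (0,2), and β = Σ_{j=1}^d 1/α_j. Define K : ℝ^d → ℝ by K(ξ) = (Σ_{k=1}^d |ar{ξ}_k|^{α_k})^{-1/2} where ξ_k are the coordinates of ξ. Then K belongs to the weak L^{2β} space, i.e., there is a constant C (depending on d only) such that for all t > 0, the Lebesgue measure of {ξ ∈ ℝ^d : K(ξ) ≥ t} is at most C · t^{-2β}. -/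
/-!
If `K ξ = (∑ₖ |ξₖ|^{αₖ})^{-p} ≥ t`, then every single term satisfies `|ξₖ|^{αₖ} ≤ t^{-1/p}`, so the
super-level set `{K ≥ t}` lies in the box `∏ₖ [-t^{-1/(p αₖ)}, t^{-1/(p αₖ)}]`, whose volume is
`2^d · t^{-(1/p) ∑ₖ 1/αₖ}`. For `p = 1/2` this is the weak `L^{2β}` bound.
-/

open MeasureTheory Real Set

lemma le_rpow_neg_inv_of_le_rpow_neg {S t p : ℝ} (hS : 0 ≤ S) (ht : 0 < t) (hp : 0 < p)
    (h : t ≤ S ^ (-p)) : S ≤ t ^ (-p⁻¹) := by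
  have hS_pos : 0 < S := by
    refine hS.lt_of_ne fun hS0 => ?_
    rw [← hS0, zero_rpow (neg_ne_zero.2 hp.ne')] at h
    exact ht.not_ge h
  calc S = (S ^ (-p)) ^ (-p⁻¹) := by
        rw [← rpow_mul hS, neg_mul_neg, mul_inv_cancel₀ hp.ne', rpow_one]
    _ ≤ t ^ (-p⁻¹) := rpow_le_rpow_of_nonpos ht h (by simpa using hp.le)

section Anisotropic

variable {ι : Type*} [Fintype ι] {α : ι → ℝ} {t p : ℝ}

lemma setOf_le_sum_rpow_neg_subset_Icc (hα : ∀ k, 0 < α k) (ht : 0 < t) (hp : 0 < p) :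
    {ξ : ι → ℝ | t ≤ (∑ k, |ξ k| ^ α k) ^ (-p)} ⊆
      Icc (-fun k => t ^ (-(p⁻¹ / α k))) (fun k => t ^ (-(p⁻¹ / α k))) := by
  intro ξ hξ
  have hsum : ∑ k, |ξ k| ^ α k ≤ t ^ (-p⁻¹) :=
    le_rpow_neg_inv_of_le_rpow_neg (by positivity) ht hp hξ
  have habs : ∀ k, |ξ k| ≤ t ^ (-(p⁻¹ / α k)) := fun k => by
    have hterm : |ξ k| ^ α k ≤ t ^ (-p⁻¹) :=
      (Finset.single_le_sum (fun j _ => by positivity) (Finset.mem_univ k)).trans hsum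
    rw [← neg_div, div_eq_mul_inv, rpow_mul ht.le]
    exact (le_rpow_inv_iff_of_pos (abs_nonneg _) (by positivity) (hα k)).2 hterm
  exact ⟨fun k => neg_le_of_abs_le (habs k), fun k => le_of_abs_le (habs k)⟩

lemma volume_setOf_le_sum_rpow_neg_le (hα : ∀ k, 0 < α k) (ht : 0 < t) (hp : 0 < p) :
    volume {ξ : ι → ℝ | t ≤ (∑ k, |ξ k| ^ α k) ^ (-p)} ≤
      ENNReal.ofReal (2 ^ Fintype.card ι * t ^ (-(p⁻¹ * ∑ k, 1 / α k))) := by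
  have hbox : ∏ k, (2 * t ^ (-(p⁻¹ / α k))) = 2 ^ Fintype.card ι * t ^ (-(p⁻¹ * ∑ k, 1 / α k)) := by
    rw [Finset.prod_mul_distrib, Finset.prod_const, Finset.card_univ, ← rpow_sum_of_pos ht,
      Finset.mul_sum, ← Finset.sum_neg_distrib]
    simp only [mul_one_div]
  calc volume {ξ : ι → ℝ | t ≤ (∑ k, |ξ k| ^ α k) ^ (-p)}
      ≤ volume (Icc (-fun k => t ^ (-(p⁻¹ / α k))) (fun k => t ^ (-(p⁻¹ / α k)))) :=
        measure_mono (setOf_le_sum_rpow_neg_subset_Icc hα ht hp)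
    _ = ENNReal.ofReal (∏ k, (2 * t ^ (-(p⁻¹ / α k)))) := by
        rw [Real.volume_Icc_pi, ENNReal.ofReal_prod_of_nonneg fun k _ => by positivity]
        exact Finset.prod_congr rfl fun k _ => by simp only [Pi.neg_apply, sub_neg_eq_add, two_mul]
    _ = _ := by rw [hbox]

end Anisotropic

theorem K_weak_L2beta_general (d : ℕ) (α : Fin d → ℝ)
    (hα : ∀ k, 0 < α k ∧ α k < 2) (β : ℝ) (hβ : β = ∑ j, 1 / α j) :
    ∃ C : ℝ, 0 < C ∧ ∀ t : ℝ, 0 < t →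
      volume {ξ : Fin d → ℝ | t ≤ (∑ k, |ξ k| ^ α k) ^ (-(1 / 2 : ℝ))} ≤
        ENNReal.ofReal (C * t ^ (-(2 * β))) := by
  refine ⟨2 ^ d, by positivity, fun t ht => ?_⟩
  have h := volume_setOf_le_sum_rpow_neg_le (fun k => (hα k).1) ht (one_half_pos (α := ℝ))
  rw [Fintype.card_fin, one_div, inv_inv, ← hβ] at h
  rwa [one_div]

theorem K_weak_L2beta (d : ℕ) (hd : 2 ≤ d) (α : Fin d → ℝ)
    (hα : ∀ k, 0 < α k ∧ α k < 2) (β : ℝ) (hβ : β = ∑ j, 1 / α j) :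
    ∃ C : ℝ, 0 < C ∧ ∀ t : ℝ, 0 < t →
      volume {ξ : Fin d → ℝ | t ≤ (∑ k, |ξ k| ^ α k) ^ (-(1 / 2 : ℝ))} ≤
        ENNReal.ofReal (C * t ^ (-(2 * β))) :=
  K_weak_L2beta_general d α hα β hβ
end
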